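/- Let U ⊆ ℂ be open and let ψ be holomorphic on U with nowhere vanishing derivative. Define gₙ : U → ℂ recursively by g₁ = ψ''/ψ' and g_{n+1} = deriv gₙ, and set dₙ(z,y) = yⁿ·gₙ(z) on U × ℂ. Then for every n ≥ 1: (Y dₙ)(z,y) = n·dₙ(z,y) and (X dₙ)(z,y) = d_{n+1}(z,y) for all (z,y) ∈ U × ℂ. (These realize the Hopf-algebra commutation relations [Y,δₙ] = nδₙ and [X,δₙ] = δ_{n+1}.) -/

import Mathlib

/-- First-variable Wirtinger derivative ∂₁F(p) = ½(DF(p)(e₁) − i·DF(p)(i·e₁)) for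
F : ℂ × ℂ → ℂ, where DF(p) is the real Fréchet derivative of F at p. -/
noncomputable def wirt1 (F : ℂ × ℂ → ℂ) (p : ℂ × ℂ) : ℂ :=
  (1 / 2 : ℂ) * (fderiv ℝ F p (1, 0) - Complex.I * fderiv ℝ F p (Complex.I, 0))

/-- Second-variable Wirtinger derivative ∂₂F(p) = ½(DF(p)(e₂) − i·DF(p)(i·e₂)). -/
noncomputable def wirt2 (F : ℂ × ℂ → ℂ) (p : ℂ × ℂ) : ℂ :=
  (1 / 2 : ℂ) * (fderiv ℝ F p (0, 1) - Complex.I * fderiv ℝ F p (0, Complex.I))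

/-- The operator (X F)(z,y) = y·∂₁F(z,y). -/
noncomputable def Xop (F : ℂ × ℂ → ℂ) : ℂ × ℂ → ℂ := fun p => p.2 * wirt1 F p

/-- The operator (Y F)(z,y) = y·∂₂F(z,y). -/
noncomputable def Yop (F : ℂ × ℂ → ℂ) : ℂ × ℂ → ℂ := fun p => p.2 * wirt2 F p

/-!
Each gₙ is holomorphic on U (ψ is analytic there and ψ' does not vanish), so dₙ(z,y) = yⁿ·gₙ(z)
is complex-differentiable in both variables, and for such functions the Wirtinger derivatives
are the complex partial derivatives: ∂₁dₙ = yⁿ·gₙ' = yⁿ·g_{n+1} and ∂₂dₙ = n·yⁿ⁻¹·gₙ.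
-/

section Wirtinger

variable {F : ℂ × ℂ → ℂ} {p : ℂ × ℂ} {L : ℂ × ℂ →L[ℂ] ℂ}

/- ℂ-linearity of `L` gives `L (i • v) = i * L v`, which cancels the antiholomorphic half. -/
theorem HasFDerivAt.wirt1_eq (h : HasFDerivAt F L p) : wirt1 F p = L (1, 0) := by
  have hI : ((Complex.I, 0) : ℂ × ℂ) = Complex.I • ((1, 0) : ℂ × ℂ) := by simp
  rw [wirt1, (h.restrictScalars ℝ).fderiv, ContinuousLinearMap.coe_restrictScalars', hI,
    L.map_smul, smul_eq_mul]
  linear_combination (-(1 / 2) * L (1, 0)) * Complex.I_sq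

theorem HasFDerivAt.wirt2_eq (h : HasFDerivAt F L p) : wirt2 F p = L (0, 1) := by
  have hI : ((0, Complex.I) : ℂ × ℂ) = Complex.I • ((0, 1) : ℂ × ℂ) := by simp
  rw [wirt2, (h.restrictScalars ℝ).fderiv, ContinuousLinearMap.coe_restrictScalars', hI,
    L.map_smul, smul_eq_mul]
  linear_combination (-(1 / 2) * L (0, 1)) * Complex.I_sq

end Wirtinger

section Monomial

variable {g : ℂ → ℂ} {z : ℂ}

theorem hasFDerivAt_pow_snd_mul_comp_fst (hg : DifferentiableAt ℂ g z) (n : ℕ) (y : ℂ) :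
    HasFDerivAt (fun p : ℂ × ℂ => p.2 ^ n * g p.1)
      ((y ^ n * deriv g z) • ContinuousLinearMap.fst ℂ ℂ ℂ
        + (n * y ^ (n - 1) * g z) • ContinuousLinearMap.snd ℂ ℂ ℂ) (z, y) := by
  have hfst := hg.hasDerivAt.comp_hasFDerivAt (z, y) (hasFDerivAt_fst (𝕜 := ℂ))
  have hsnd := (hasDerivAt_pow n y).comp_hasFDerivAt (z, y) (hasFDerivAt_snd (𝕜 := ℂ))
  refine (hsnd.mul hfst).congr_fderiv ?_
  ext <;> simp [mul_comm]

theorem Yop_pow_snd_mul_comp_fst (hg : DifferentiableAt ℂ g z) (n : ℕ) (y : ℂ) :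
    Yop (fun p : ℂ × ℂ => p.2 ^ n * g p.1) (z, y) = n * (y ^ n * g z) := by
  rw [Yop, (hasFDerivAt_pow_snd_mul_comp_fst hg n y).wirt2_eq]
  rcases n with _ | n
  · simp
  · simp only [add_apply, smul_apply,
      ContinuousLinearMap.coe_fst', ContinuousLinearMap.coe_snd', smul_eq_mul,
      Nat.add_sub_cancel]
    push_cast
    ring

theorem Xop_pow_snd_mul_comp_fst (hg : DifferentiableAt ℂ g z) (n : ℕ) (y : ℂ) :
    Xop (fun p : ℂ × ℂ => p.2 ^ n * g p.1) (z, y) = y ^ (n + 1) * deriv g z := by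
  rw [Xop, (hasFDerivAt_pow_snd_mul_comp_fst hg n y).wirt1_eq]
  simp only [add_apply, smul_apply,
    ContinuousLinearMap.coe_fst', ContinuousLinearMap.coe_snd', smul_eq_mul]
  ring

end Monomial

/-- For ψ holomorphic with nowhere vanishing derivative on the open set U, with
gₙ = deriv^[n-1] (ψ''/ψ') and dₙ(z,y) = yⁿ·gₙ(z), one has for every n ≥ 1 and every
(z,y) ∈ U × ℂ: (Y dₙ)(z,y) = n·dₙ(z,y) and (X dₙ)(z,y) = d_{n+1}(z,y). -/
theorem stmt3 (U : Set ℂ) (hU : IsOpen U) (ψ : ℂ → ℂ)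
    (hψ : DifferentiableOn ℂ ψ U) (hne : ∀ z ∈ U, deriv ψ z ≠ 0) :
    ∀ n : ℕ, 1 ≤ n → ∀ z ∈ U, ∀ y : ℂ,
      Yop (fun p : ℂ × ℂ =>
          p.2 ^ n * (deriv^[n - 1] fun w => deriv (deriv ψ) w / deriv ψ w) p.1) (z, y)
        = (n : ℂ) * (y ^ n * (deriv^[n - 1] fun w => deriv (deriv ψ) w / deriv ψ w) z) ∧
      Xop (fun p : ℂ × ℂ =>
          p.2 ^ n * (deriv^[n - 1] fun w => deriv (deriv ψ) w / deriv ψ w) p.1) (z, y)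
        = y ^ (n + 1) * (deriv^[n] fun w => deriv (deriv ψ) w / deriv ψ w) z := by
  intro n hn z hz y
  set f : ℂ → ℂ := fun w => deriv (deriv ψ) w / deriv ψ w
  have hψ' : AnalyticOnNhd ℂ (deriv ψ) U := (hψ.analyticOnNhd hU).deriv
  have hf : AnalyticOnNhd ℂ f U := hψ'.deriv.div hψ' hne
  have hg : DifferentiableAt ℂ (deriv^[n - 1] f) z :=
    (hf.iterated_deriv (n - 1) z hz).differentiableAt
  obtain ⟨k, rfl⟩ : ∃ k, n = k + 1 := ⟨n - 1, by omega⟩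
  refine ⟨Yop_pow_snd_mul_comp_fst hg _ y, ?_⟩
  rw [Xop_pow_snd_mul_comp_fst hg, Function.iterate_succ_apply']
  rfl
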